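/- arXiv:1403.1606 — 2 statements merged into one kernel-verified Lean document; each statement's English description precedes it below -/
import Mathlib

section
/- Let f : U → ℝⁿ be a minimal immersion with Z(p) ≠ 0 for every p ∈ U, and let g := f − Z be its pedal surface. Then ⟨g_x,g_y⟩ ≡ 0 and ‖g_x‖ ≡ ‖g_y‖ on U (g is conformal to f) if and only if f is 1-isotropic, i.e. ⟪φ′,φ′⟫ ≡ 0. -/
noncomputable section

open Complex Submodule Module
open scoped RealInnerProductSpace

/-- ℝⁿ as Euclidean space. -/
abbrev Euc (n : ℕ) : Type := EuclideanSpace ℝ (Fin n)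
/-- ℂⁿ. -/
abbrev EucC (n : ℕ) : Type := EuclideanSpace ℂ (Fin n)

variable {n : ℕ}

/-- Partial derivative in the `x` direction. -/
def pdx (f : ℝ × ℝ → Euc n) (p : ℝ × ℝ) : Euc n := fderiv ℝ f p (1, 0)

/-- Partial derivative in the `y` direction. -/
def pdy (f : ℝ × ℝ → Euc n) (p : ℝ × ℝ) : Euc n := fderiv ℝ f p (0, 1)

/-- Partial derivative in the `x` direction, for ℂⁿ-valued maps. -/
def pdxC (φ : ℝ × ℝ → EucC n) (p : ℝ × ℝ) : EucC n := fderiv ℝ φ p (1, 0)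

/-- Partial derivative in the `y` direction, for ℂⁿ-valued maps. -/
def pdyC (φ : ℝ × ℝ → EucC n) (p : ℝ × ℝ) : EucC n := fderiv ℝ φ p (0, 1)

/-- The inclusion ℝⁿ ⊆ ℂⁿ. -/
def cx (v : Euc n) : EucC n := WithLp.toLp 2 (fun k => (v k : ℂ))

/-- Componentwise real part. -/
def reV (w : EucC n) : Euc n := WithLp.toLp 2 (fun k => (w k).re)

/-- Componentwise imaginary part. -/
def imV (w : EucC n) : Euc n := WithLp.toLp 2 (fun k => (w k).im)

/-- The ℂ-bilinear extension of the Euclidean inner product: ⟪u,w⟫ = ∑ uₖwₖ. -/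
def bil (u w : EucC n) : ℂ := ∑ k, u k * w k

/-- The Wirtinger derivative ∂/∂z = (1/2)(∂ₓ - i ∂_y). -/
def pdz (φ : ℝ × ℝ → EucC n) : ℝ × ℝ → EucC n :=
  fun p => (1 / 2 : ℂ) • (pdxC φ p - Complex.I • pdyC φ p)

/-- The Wirtinger derivative ∂/∂z̄ = (1/2)(∂ₓ + i ∂_y). -/
def pdzbar (φ : ℝ × ℝ → EucC n) : ℝ × ℝ → EucC n :=
  fun p => (1 / 2 : ℂ) • (pdxC φ p + Complex.I • pdyC φ p)

/-- φ = f_x - i f_y. -/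
def phiOf (f : ℝ × ℝ → Euc n) : ℝ × ℝ → EucC n :=
  fun p => cx (pdx f p) - Complex.I • cx (pdy f p)

/-- Orthogonal projection onto a subspace, as a map `Euc n → Euc n`. -/
def projSub (K : Submodule ℝ (Euc n)) (v : Euc n) : Euc n :=
  (orthogonalProjection K v : Euc n)

/-- The tangent plane T(p) = span{f_x(p), f_y(p)}. -/
def TangentSp (f : ℝ × ℝ → Euc n) (p : ℝ × ℝ) : Submodule ℝ (Euc n) :=
  span ℝ {pdx f p, pdy f p}

/-- Projection onto the normal space T(p)ᗮ. -/
def nProj (f : ℝ × ℝ → Euc n) (p : ℝ × ℝ) (v : Euc n) : Euc n :=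
  v - projSub (TangentSp f p) v

/-- α₁₁ = P(f_xx). -/
def a11 (f : ℝ × ℝ → Euc n) (p : ℝ × ℝ) : Euc n := nProj f p (pdx (pdx f) p)

/-- α₁₂ = P(f_xy). -/
def a12 (f : ℝ × ℝ → Euc n) (p : ℝ × ℝ) : Euc n := nProj f p (pdx (pdy f) p)

/-- α₂₂ = P(f_yy). -/
def a22 (f : ℝ × ℝ → Euc n) (p : ℝ × ℝ) : Euc n := nProj f p (pdy (pdy f) p)

/-- The first normal space N₁(p). -/
def N1 (f : ℝ × ℝ → Euc n) (p : ℝ × ℝ) : Submodule ℝ (Euc n) :=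
  span ℝ {a11 f p, a12 f p, a22 f p}

/-- Z(p): tangential component of the position vector. -/
def Zt (f : ℝ × ℝ → Euc n) (p : ℝ × ℝ) : Euc n := projSub (TangentSp f p) (f p)

/-- The pedal surface g = f - Z (w.r.t. the origin). -/
def pedal (f : ℝ × ℝ → Euc n) : ℝ × ℝ → Euc n := fun p => f p - Zt f p

/-- δ(p): component of the position vector in N₁(p). -/
def deltaLow (f : ℝ × ℝ → Euc n) (p : ℝ × ℝ) : Euc n := projSub (N1 f p) (f p)

/-- Projection onto (T(p) ⊕ N₁(p))ᗮ. -/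
def nProj2 (f : ℝ × ℝ → Euc n) (p : ℝ × ℝ) (v : Euc n) : Euc n :=
  v - projSub (TangentSp f p ⊔ N1 f p) v

/-- The second normal space N₂(p). -/
def N2 (f : ℝ × ℝ → Euc n) (p : ℝ × ℝ) : Submodule ℝ (Euc n) :=
  span ℝ {nProj2 f p (pdx (pdx (pdx f)) p), nProj2 f p (pdx (pdx (pdy f)) p),
          nProj2 f p (pdx (pdy (pdy f)) p), nProj2 f p (pdy (pdy (pdy f)) p)}

/-- Projection onto (T(p) ⊕ N₁(p) ⊕ N₂(p))ᗮ. -/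
def nProj3 (f : ℝ × ℝ → Euc n) (p : ℝ × ℝ) (v : Euc n) : Euc n :=
  v - projSub (TangentSp f p ⊔ N1 f p ⊔ N2 f p) v

/-- The third normal space N₃(p). -/
def N3 (f : ℝ × ℝ → Euc n) (p : ℝ × ℝ) : Submodule ℝ (Euc n) :=
  span ℝ {nProj3 f p (pdx (pdx (pdx (pdx f))) p), nProj3 f p (pdx (pdx (pdx (pdy f))) p),
          nProj3 f p (pdx (pdx (pdy (pdy f))) p), nProj3 f p (pdx (pdy (pdy (pdy f))) p),
          nProj3 f p (pdy (pdy (pdy (pdy f))) p)}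

/-- Smooth immersion on `U`. -/
def IsImmersionOn (f : ℝ × ℝ → Euc n) (U : Set (ℝ × ℝ)) : Prop :=
  ContDiffOn ℝ (⊤ : ℕ∞) f U ∧ ∀ p ∈ U, LinearIndependent ℝ ![pdx f p, pdy f p]

/-- Conformal immersion on `U`. -/
def IsConformalOn (f : ℝ × ℝ → Euc n) (U : Set (ℝ × ℝ)) : Prop :=
  IsImmersionOn f U ∧ ∀ p ∈ U, (inner ℝ (pdx f p) (pdy f p) : ℝ) = 0 ∧ ‖pdx f p‖ = ‖pdy f p‖

/-- Minimal (conformal harmonic) immersion on `U`. -/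
def IsMinimalOn (f : ℝ × ℝ → Euc n) (U : Set (ℝ × ℝ)) : Prop :=
  IsConformalOn f U ∧ ∀ p ∈ U, pdx (pdx f) p + pdy (pdy f) p = 0

/-- 1-isotropic: ⟪φ′,φ′⟫ ≡ 0. -/
def IsIsotropic1On (f : ℝ × ℝ → Euc n) (U : Set (ℝ × ℝ)) : Prop :=
  ∀ p ∈ U, bil (pdz (phiOf f) p) (pdz (phiOf f) p) = 0

/-- 2-isotropic: moreover ⟪φ″,φ″⟫ ≡ 0. -/
def IsIsotropic2On (f : ℝ × ℝ → Euc n) (U : Set (ℝ × ℝ)) : Prop :=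
  IsIsotropic1On f U ∧ ∀ p ∈ U, bil (pdz (pdz (phiOf f)) p) (pdz (pdz (phiOf f)) p) = 0

/-- 3-isotropic: moreover ⟪φ‴,φ‴⟫ ≡ 0. -/
def IsIsotropic3On (f : ℝ × ℝ → Euc n) (U : Set (ℝ × ℝ)) : Prop :=
  IsIsotropic2On f U ∧
    ∀ p ∈ U, bil (pdz (pdz (pdz (phiOf f))) p) (pdz (pdz (pdz (phiOf f))) p) = 0

/-- Regular (nicely curved): dim N₁ = dim N₂ = 2 everywhere. -/
def IsRegularOn (f : ℝ × ℝ → Euc n) (U : Set (ℝ × ℝ)) : Prop :=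
  ∀ p ∈ U, finrank ℝ (N1 f p) = 2 ∧ finrank ℝ (N2 f p) = 2

/-- Substantial: the image is contained in no proper affine subspace. -/
def IsSubstantialOn (f : ℝ × ℝ → Euc n) (U : Set (ℝ × ℝ)) : Prop :=
  ∀ A : AffineSubspace ℝ (Euc n), (∀ p ∈ U, f p ∈ A) → A = ⊤

/-- ξ₁ = (α₁₁ - α₂₂)/(2‖f_x‖²). -/
def xi1 (f : ℝ × ℝ → Euc n) (p : ℝ × ℝ) : Euc n :=
  (2 * ‖pdx f p‖ ^ 2)⁻¹ • (a11 f p - a22 f p)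

/-- ξ₂ = α₁₂/‖f_x‖². -/
def xi2 (f : ℝ × ℝ → Euc n) (p : ℝ × ℝ) : Euc n :=
  (‖pdx f p‖ ^ 2)⁻¹ • a12 f p

/-- Superconformal: the curvature ellipse is a nondegenerate circle at every point. -/
def IsSuperconformalOn (f : ℝ × ℝ → Euc n) (U : Set (ℝ × ℝ)) : Prop :=
  ∀ p ∈ U, (inner ℝ (xi1 f p) (xi2 f p) : ℝ) = 0 ∧ ‖xi1 f p‖ = ‖xi2 f p‖ ∧ xi1 f p ≠ 0

/-- The Gaussian curvature K = (⟨α₁₁,α₂₂⟩ - ‖α₁₂‖²)/ρ⁴. -/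
def Kcurv (f : ℝ × ℝ → Euc n) (p : ℝ × ℝ) : ℝ :=
  ((inner ℝ (a11 f p) (a22 f p) : ℝ) - ‖a12 f p‖ ^ 2) / ‖pdx f p‖ ^ 4

/-- θ̂ = ‖Z‖² + ‖δ‖². -/
def thetaHat (f : ℝ × ℝ → Euc n) (p : ℝ × ℝ) : ℝ :=
  ‖Zt f p‖ ^ 2 + ‖deltaLow f p‖ ^ 2

/-- JZ = (⟨Z,f_x⟩f_y - ⟨Z,f_y⟩f_x)/ρ². -/
def Jz (f : ℝ × ℝ → Euc n) (p : ℝ × ℝ) : Euc n :=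
  (‖pdx f p‖ ^ 2)⁻¹ •
    ((inner ℝ (Zt f p) (pdx f p) : ℝ) • pdy f p - (inner ℝ (Zt f p) (pdy f p) : ℝ) • pdx f p)

/-- J⊥δ = (⟨δ,α₁₁⟩α₁₂ - ⟨δ,α₁₂⟩α₁₁)/‖α₁₁‖². -/
def JperpDelta (f : ℝ × ℝ → Euc n) (p : ℝ × ℝ) : Euc n :=
  (‖a11 f p‖ ^ 2)⁻¹ •
    ((inner ℝ (deltaLow f p) (a11 f p) : ℝ) • a12 f p - (inner ℝ (deltaLow f p) (a12 f p) : ℝ) • a11 f p)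

/-- ℂ-linear extension of the projection onto the normal space of `f`. -/
def nProjC (f : ℝ × ℝ → Euc n) (p : ℝ × ℝ) (w : EucC n) : EucC n :=
  cx (nProj f p (reV w)) + Complex.I • cx (nProj f p (imV w))

/-- ℂ-linear extension of the projection onto (T ⊕ N₁)ᗮ. -/
def nProj2C (f : ℝ × ℝ → Euc n) (p : ℝ × ℝ) (w : EucC n) : EucC n :=
  cx (nProj2 f p (reV w)) + Complex.I • cx (nProj2 f p (imV w))

/-- g_zz = (1/4)(g_xx - g_yy - 2i g_xy). -/
def gzz (g : ℝ × ℝ → Euc n) (p : ℝ × ℝ) : EucC n :=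
  (1 / 4 : ℂ) •
    (cx (pdx (pdx g) p) - cx (pdy (pdy g) p) - (2 * Complex.I) • cx (pdx (pdy g) p))

/-- The inversion ℐ_{p₀,R}. -/
def inversionMap (p₀ : Euc n) (R : ℝ) (q : Euc n) : Euc n :=
  p₀ + (R ^ 2 / ‖q - p₀‖ ^ 2) • (q - p₀)

/-- The mean curvature vector H = (P(g_xx) + P(g_yy))/(2‖g_x‖²). -/
def meanCurv (g : ℝ × ℝ → Euc n) (p : ℝ × ℝ) : Euc n :=
  (2 * ‖pdx g p‖ ^ 2)⁻¹ • (nProj g p (pdx (pdx g) p) + nProj g p (pdy (pdy g) p))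

/-- The pointwise normal component of a fixed vector `v` along `f`. -/
def normalComp (f : ℝ × ℝ → Euc n) (v : Euc n) : ℝ × ℝ → Euc n :=
  fun p => v - projSub (TangentSp f p) v

/-- Third directional derivative ((cos θ)∂ₓ + (sin θ)∂_y)³ f. -/
def dir3 (f : ℝ × ℝ → Euc n) (θ : ℝ) (p : ℝ × ℝ) : Euc n :=
  (Real.cos θ ^ 3) • pdx (pdx (pdx f)) p
    + (3 * Real.cos θ ^ 2 * Real.sin θ) • pdx (pdx (pdy f)) p
    + (3 * Real.cos θ * Real.sin θ ^ 2) • pdx (pdy (pdy f)) p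
    + (Real.sin θ ^ 3) • pdy (pdy (pdy f)) p
section helpers
variable {n : ℕ} {p e : ℝ × ℝ}

def cxL : Euc n →L[ℝ] EucC n :=
  LinearMap.toContinuousLinearMap
    { toFun := cx
      map_add' := fun u v => by ext k; simp [cx]
      map_smul' := fun c v => by ext k; simp [cx] }

@[simp] lemma cxL_apply (v : Euc n) : (cxL v : EucC n) = cx v := rfl

lemma proj_span_pair (u v w : Euc n) (huv : ⟪u, v⟫ = 0) (hu : u ≠ 0) (hv : v ≠ 0) :
    (orthogonalProjection (span ℝ {u, v}) w : Euc n)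
      = (⟪u,u⟫)⁻¹ • (⟪w, u⟫ • u) + (⟪v,v⟫)⁻¹ • (⟪w, v⟫ • v) := by
  have hu2 : ⟪u,u⟫ ≠ 0 := fun h => hu (inner_self_eq_zero.mp h)
  have hv2 : ⟪v,v⟫ ≠ 0 := fun h => hv (inner_self_eq_zero.mp h)
  have hvu : ⟪v, u⟫ = 0 := by rwa [real_inner_comm]
  refine Submodule.eq_starProjection_of_mem_of_inner_eq_zero (K := span ℝ {u, v}) ?_ ?_
  · exact Submodule.add_mem _
      (Submodule.smul_mem _ _ (Submodule.smul_mem _ _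
        (Submodule.subset_span (by simp))))
      (Submodule.smul_mem _ _ (Submodule.smul_mem _ _
        (Submodule.subset_span (by simp))))
  · intro z hz
    have key : ∀ z ∈ ({u, v} : Set (Euc n)),
        ⟪w - ((⟪u,u⟫)⁻¹ • (⟪w, u⟫ • u) + (⟪v,v⟫)⁻¹ • (⟪w, v⟫ • v)), z⟫ = 0 := by
      rintro z hzz
      rcases hzz with h | h <;> rw [h]
      · rw [inner_sub_left, inner_add_left, real_inner_smul_left, real_inner_smul_left,
          real_inner_smul_left, real_inner_smul_left, hvu, mul_zero, mul_zero, add_zero,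
          mul_comm (⟪w,u⟫) (⟪u,u⟫), inv_mul_cancel_left₀ hu2, sub_self]
      · rw [inner_sub_left, inner_add_left, real_inner_smul_left, real_inner_smul_left,
          real_inner_smul_left, real_inner_smul_left, huv, mul_zero, mul_zero, zero_add,
          mul_comm (⟪w,v⟫) (⟪v,v⟫), inv_mul_cancel_left₀ hv2, sub_self]
    induction hz using Submodule.span_induction with
    | mem x hx => exact key x hx
    | zero => simp
    | add x y _ _ hx hy => rw [inner_add_right, hx, hy]; ring
    | smul c x _ hx => rw [real_inner_smul_right, hx]; ring

lemma fd_smul {c : ℝ × ℝ → ℝ} {w : ℝ × ℝ → Euc n}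
    (hc : DifferentiableAt ℝ c p) (hw : DifferentiableAt ℝ w p) (e : ℝ × ℝ) :
    fderiv ℝ (fun q => c q • w q) p e = c p • fderiv ℝ w p e + fderiv ℝ c p e • w p := by
  rw [show (fun q => c q • w q) = c • w from rfl, (hc.hasFDerivAt.smul hw.hasFDerivAt).fderiv]
  simp

lemma fd_inner {w1 w2 : ℝ × ℝ → Euc n}
    (h1 : DifferentiableAt ℝ w1 p) (h2 : DifferentiableAt ℝ w2 p) (e : ℝ × ℝ) :
    fderiv ℝ (fun q => ⟪w1 q, w2 q⟫) p e = ⟪w1 p, fderiv ℝ w2 p e⟫ + ⟪fderiv ℝ w1 p e, w2 p⟫ := by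
  rw [(h1.hasFDerivAt.inner ℝ h2.hasFDerivAt).fderiv]
  simp [fderivInnerCLM_apply]

lemma fd_inv {c : ℝ × ℝ → ℝ} (hc : DifferentiableAt ℝ c p) (h0 : c p ≠ 0) (e : ℝ × ℝ) :
    fderiv ℝ (fun q => (c q)⁻¹) p e = -((c p)^2)⁻¹ * fderiv ℝ c p e := by
  have h : HasFDerivAt (fun q => (c q)⁻¹)
      ((-((ContinuousLinearMap.mulLeftRight ℝ ℝ) (c p)⁻¹) (c p)⁻¹).comp (fderiv ℝ c p)) p :=
    (hasFDerivAt_inv' h0).comp p hc.hasFDerivAt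
  rw [h.fderiv]
  simp [ContinuousLinearMap.mulLeftRight_apply]
  rw [pow_two, mul_inv]
  ring

end helpers

section smooth
variable {n : ℕ} {U : Set (ℝ × ℝ)} {f : ℝ × ℝ → Euc n} {p : ℝ × ℝ}

lemma contDiffAt_pd (hU : IsOpen U) (hf : ContDiffOn ℝ (⊤ : ℕ∞) f U) (hp : p ∈ U) (e : ℝ × ℝ) :
    ContDiffAt ℝ 2 (fun q => fderiv ℝ f q e) p := by
  have h1 : ContDiffAt ℝ (⊤ : ℕ∞) f p := hf.contDiffAt (hU.mem_nhds hp)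
  have h2 : ContDiffAt ℝ 2 (fderiv ℝ f) p := h1.fderiv_right (by exact WithTop.coe_le_coe.mpr le_top)
  exact ContDiffAt.comp p ((ContinuousLinearMap.apply ℝ (Euc n) e).contDiff.contDiffAt) h2

lemma diff_pdx (hU : IsOpen U) (hf : ContDiffOn ℝ (⊤ : ℕ∞) f U) (hp : p ∈ U) :
    DifferentiableAt ℝ (pdx f) p :=
  ((contDiffAt_pd hU hf hp (1,0)).differentiableAt (by norm_num))

lemma diff_pdy (hU : IsOpen U) (hf : ContDiffOn ℝ (⊤ : ℕ∞) f U) (hp : p ∈ U) :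
    DifferentiableAt ℝ (pdy f) p :=
  ((contDiffAt_pd hU hf hp (0,1)).differentiableAt (by norm_num))

lemma fd_pd (hU : IsOpen U) (hf : ContDiffOn ℝ (⊤ : ℕ∞) f U) (hp : p ∈ U) (e e' : ℝ × ℝ) :
    fderiv ℝ (fun q => fderiv ℝ f q e) p e' = fderiv ℝ (fderiv ℝ f) p e' e := by
  have h1 : ContDiffAt ℝ (⊤ : ℕ∞) f p := hf.contDiffAt (hU.mem_nhds hp)
  have h2 : ContDiffAt ℝ 2 (fderiv ℝ f) p := h1.fderiv_right (by exact WithTop.coe_le_coe.mpr le_top)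
  have h3 : HasFDerivAt (fun q => fderiv ℝ f q e)
      ((ContinuousLinearMap.apply ℝ (Euc n) e).comp (fderiv ℝ (fderiv ℝ f) p)) p :=
    ((ContinuousLinearMap.apply ℝ (Euc n) e).hasFDerivAt).comp p
      (h2.differentiableAt (by norm_num)).hasFDerivAt
  rw [h3.fderiv]
  rfl

lemma pd_symm (hU : IsOpen U) (hf : ContDiffOn ℝ (⊤ : ℕ∞) f U) (hp : p ∈ U) :
    pdx (pdy f) p = pdy (pdx f) p := by
  have h1 : ContDiffAt ℝ (⊤ : ℕ∞) f p := hf.contDiffAt (hU.mem_nhds hp)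
  have hs : IsSymmSndFDerivAt ℝ f p := h1.isSymmSndFDerivAt (by rw [minSmoothness_of_isRCLikeNormedField]; exact WithTop.coe_le_coe.mpr le_top)
  show fderiv ℝ (pdy f) p (1,0) = fderiv ℝ (pdx f) p (0,1)
  have e1 : fderiv ℝ (pdy f) p (1,0) = fderiv ℝ (fderiv ℝ f) p (1,0) (0,1) :=
    fd_pd hU hf hp (0,1) (1,0)
  have e2 : fderiv ℝ (pdx f) p (0,1) = fderiv ℝ (fderiv ℝ f) p (0,1) (1,0) :=
    fd_pd hU hf hp (1,0) (0,1)
  rw [e1, e2, hs.eq]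

end smooth

section maincomp
variable {n : ℕ} {U : Set (ℝ × ℝ)} {f : ℝ × ℝ → Euc n} {p : ℝ × ℝ}

set_option maxHeartbeats 2000000 in
lemma pedal_pd (hU : IsOpen U) (hf : ContDiffOn ℝ (⊤ : ℕ∞) f U)
    (hconf0 : ∀ q ∈ U, ⟪pdx f q, pdy f q⟫ = 0)
    (hconf1 : ∀ q ∈ U, ⟪pdx f q, pdx f q⟫ = ⟪pdy f q, pdy f q⟫)
    (hne : ∀ q ∈ U, pdx f q ≠ 0 ∧ pdy f q ≠ 0)
    (hharm : ∀ q ∈ U, pdx (pdx f) q + pdy (pdy f) q = 0)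
    (hp : p ∈ U) :
    pdx (pedal f) p =
      (⟪pdx f p, pdx f p⟫)⁻¹ •
        ((2 * ⟪pdx (pdx f) p, pdx f p⟫ * ⟪f p, pdx f p⟫ / ⟪pdx f p, pdx f p⟫
            - ⟪f p, pdx (pdx f) p⟫) • pdx f p
         + (2 * ⟪pdx (pdx f) p, pdx f p⟫ * ⟪f p, pdy f p⟫ / ⟪pdx f p, pdx f p⟫
            - ⟪f p, pdx (pdy f) p⟫) • pdy f p
         - ⟪f p, pdx f p⟫ • pdx (pdx f) p - ⟪f p, pdy f p⟫ • pdx (pdy f) p) ∧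
    pdy (pedal f) p =
      (⟪pdx f p, pdx f p⟫)⁻¹ •
        ((2 * ⟪pdx (pdy f) p, pdx f p⟫ * ⟪f p, pdx f p⟫ / ⟪pdx f p, pdx f p⟫
            - ⟪f p, pdx (pdy f) p⟫) • pdx f p
         + (2 * ⟪pdx (pdy f) p, pdx f p⟫ * ⟪f p, pdy f p⟫ / ⟪pdx f p, pdx f p⟫
            + ⟪f p, pdx (pdx f) p⟫) • pdy f p
         + ⟪f p, pdy f p⟫ • pdx (pdx f) p - ⟪f p, pdx f p⟫ • pdx (pdy f) p) ∧
    ⟪pdx (pdy f) p, pdy f p⟫ = ⟪pdx (pdx f) p, pdx f p⟫ ∧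
    ⟪pdx (pdx f) p, pdy f p⟫ = -⟪pdx (pdy f) p, pdx f p⟫ ∧
    pdy (pdy f) p = - pdx (pdx f) p ∧
    pdy (pdx f) p = pdx (pdy f) p := by
  -- differentiability
  have hdf : DifferentiableAt ℝ f p :=
    (hf.contDiffAt (hU.mem_nhds hp)).differentiableAt (by simp)
  have hdX : DifferentiableAt ℝ (pdx f) p := diff_pdx hU hf hp
  have hdY : DifferentiableAt ℝ (pdy f) p := diff_pdy hU hf hp
  have h0r : ⟪pdx f p, pdx f p⟫ ≠ 0 := fun h => (hne p hp).1 (inner_self_eq_zero.mp h)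
  have h0r2 : ⟪pdy f p, pdy f p⟫ ≠ 0 := fun h => (hne p hp).2 (inner_self_eq_zero.mp h)
  have hd_rf : DifferentiableAt ℝ (fun q => ⟪pdx f q, pdx f q⟫) p := hdX.inner ℝ hdX
  have hd_r2f : DifferentiableAt ℝ (fun q => ⟪pdy f q, pdy f q⟫) p := hdY.inner ℝ hdY
  have hd_alf : DifferentiableAt ℝ (fun q => ⟪f q, pdx f q⟫) p := hdf.inner ℝ hdX
  have hd_bef : DifferentiableAt ℝ (fun q => ⟪f q, pdy f q⟫) p := hdf.inner ℝ hdY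
  have hdA : DifferentiableAt ℝ
      (fun q => (⟪pdx f q, pdx f q⟫)⁻¹ • (⟪f q, pdx f q⟫ • pdx f q)) p :=
    (hd_rf.inv h0r).smul (hd_alf.smul hdX)
  have hdB : DifferentiableAt ℝ
      (fun q => (⟪pdy f q, pdy f q⟫)⁻¹ • (⟪f q, pdy f q⟫ • pdy f q)) p :=
    (hd_r2f.inv h0r2).smul (hd_bef.smul hdY)
  have hdZ : DifferentiableAt ℝ
      (fun q => (⟪pdx f q, pdx f q⟫)⁻¹ • (⟪f q, pdx f q⟫ • pdx f q)
        + (⟪pdy f q, pdy f q⟫)⁻¹ • (⟪f q, pdy f q⟫ • pdy f q)) p := hdA.add hdB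
  -- pedal agrees with explicit formula near p
  have hev : pedal f =ᶠ[nhds p]
      (fun q => f q - ((⟪pdx f q, pdx f q⟫)⁻¹ • (⟪f q, pdx f q⟫ • pdx f q)
        + (⟪pdy f q, pdy f q⟫)⁻¹ • (⟪f q, pdy f q⟫ • pdy f q))) := by
    filter_upwards [hU.mem_nhds hp] with q hq
    have h1 : pdx f q ≠ 0 := (hne q hq).1
    have h2 : pdy f q ≠ 0 := (hne q hq).2
    have := proj_span_pair (pdx f q) (pdy f q) (f q) (hconf0 q hq) h1 h2
    show f q - Zt f q = _
    rw [show Zt f q = (orthogonalProjection (span ℝ {pdx f q, pdy f q}) (f q) : Euc n) from rfl,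
      this]
  have hfd_eq : fderiv ℝ (pedal f) p =
      fderiv ℝ (fun q => f q - ((⟪pdx f q, pdx f q⟫)⁻¹ • (⟪f q, pdx f q⟫ • pdx f q)
        + (⟪pdy f q, pdy f q⟫)⁻¹ • (⟪f q, pdy f q⟫ • pdy f q))) p := hev.fderiv_eq
  -- generic directional derivative
  have hDZ : ∀ e : ℝ × ℝ,
      fderiv ℝ (fun q => f q - ((⟪pdx f q, pdx f q⟫)⁻¹ • (⟪f q, pdx f q⟫ • pdx f q)
        + (⟪pdy f q, pdy f q⟫)⁻¹ • (⟪f q, pdy f q⟫ • pdy f q))) p e =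
      fderiv ℝ f p e -
        (((⟪pdx f p, pdx f p⟫)⁻¹ •
            (⟪f p, pdx f p⟫ • fderiv ℝ (pdx f) p e
              + (⟪f p, fderiv ℝ (pdx f) p e⟫ + ⟪fderiv ℝ f p e, pdx f p⟫) • pdx f p)
          + (-((⟪pdx f p, pdx f p⟫)^2)⁻¹ *
              (⟪pdx f p, fderiv ℝ (pdx f) p e⟫ + ⟪fderiv ℝ (pdx f) p e, pdx f p⟫))
              • (⟪f p, pdx f p⟫ • pdx f p))
        + ((⟪pdy f p, pdy f p⟫)⁻¹ •
            (⟪f p, pdy f p⟫ • fderiv ℝ (pdy f) p e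
              + (⟪f p, fderiv ℝ (pdy f) p e⟫ + ⟪fderiv ℝ f p e, pdy f p⟫) • pdy f p)
          + (-((⟪pdy f p, pdy f p⟫)^2)⁻¹ *
              (⟪pdy f p, fderiv ℝ (pdy f) p e⟫ + ⟪fderiv ℝ (pdy f) p e, pdy f p⟫))
              • (⟪f p, pdy f p⟫ • pdy f p))) := by
    intro e
    rw [fderiv_fun_sub hdf hdZ]
    rw [ContinuousLinearMap.sub_apply]
    congr 1
    rw [fderiv_fun_add hdA hdB, ContinuousLinearMap.add_apply]
    congr 1
    · rw [fd_smul (c := fun q => (⟪pdx f q, pdx f q⟫)⁻¹) (w := fun q => ⟪f q, pdx f q⟫ • pdx f q)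
          (hd_rf.inv h0r) (hd_alf.smul hdX) e,
        fd_smul hd_alf hdX e, fd_inv hd_rf h0r e, fd_inner hdf hdX e, fd_inner hdX hdX e]
    · rw [fd_smul (c := fun q => (⟪pdy f q, pdy f q⟫)⁻¹) (w := fun q => ⟪f q, pdy f q⟫ • pdy f q)
          (hd_r2f.inv h0r2) (hd_bef.smul hdY) e,
        fd_smul hd_bef hdY e, fd_inv hd_r2f h0r2 e, fd_inner hdf hdY e, fd_inner hdY hdY e]
  -- pointwise identities
  have hc0 : ⟪pdx f p, pdy f p⟫ = 0 := hconf0 p hp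
  have hc1 : ⟪pdy f p, pdy f p⟫ = ⟪pdx f p, pdx f p⟫ := (hconf1 p hp).symm
  have hcc : pdy (pdy f) p = - pdx (pdx f) p :=
    (neg_eq_of_add_eq_zero_right (hharm p hp)).symm
  have hsym : pdy (pdx f) p = pdx (pdy f) p := (pd_symm hU hf hp).symm
  -- derivative of conformality relations
  have hG : ∀ e : ℝ × ℝ, ⟪pdx f p, fderiv ℝ (pdy f) p e⟫ + ⟪fderiv ℝ (pdx f) p e, pdy f p⟫ = 0 := by
    intro e
    have hev0 : (fun q => ⟪pdx f q, pdy f q⟫) =ᶠ[nhds p] (fun _ => (0:ℝ)) := by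
      filter_upwards [hU.mem_nhds hp] with q hq; exact hconf0 q hq
    have h1 : fderiv ℝ (fun q => ⟪pdx f q, pdy f q⟫) p = 0 := by
      rw [hev0.fderiv_eq]; exact fderiv_const_apply 0
    have h2 := fd_inner hdX hdY e
    rw [h1] at h2; simpa using h2.symm
  have hH : ∀ e : ℝ × ℝ, ⟪pdx f p, fderiv ℝ (pdx f) p e⟫ + ⟪fderiv ℝ (pdx f) p e, pdx f p⟫
      = ⟪pdy f p, fderiv ℝ (pdy f) p e⟫ + ⟪fderiv ℝ (pdy f) p e, pdy f p⟫ := by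
    intro e
    have hev0 : (fun q => ⟪pdx f q, pdx f q⟫ - ⟪pdy f q, pdy f q⟫) =ᶠ[nhds p]
        (fun _ => (0:ℝ)) := by
      filter_upwards [hU.mem_nhds hp] with q hq
      rw [hconf1 q hq, sub_self]
    have h1 : fderiv ℝ (fun q => ⟪pdx f q, pdx f q⟫ - ⟪pdy f q, pdy f q⟫) p = 0 := by
      rw [hev0.fderiv_eq]; exact fderiv_const_apply 0
    have h2 : fderiv ℝ (fun q => ⟪pdx f q, pdx f q⟫ - ⟪pdy f q, pdy f q⟫) p e
        = fderiv ℝ (fun q => ⟪pdx f q, pdx f q⟫) p e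
          - fderiv ℝ (fun q => ⟪pdy f q, pdy f q⟫) p e := by
      rw [fderiv_fun_sub hd_rf hd_r2f]; rfl
    rw [h1] at h2
    rw [fd_inner hdX hdX e, fd_inner hdY hdY e] at h2
    have := h2.symm
    simp only [ContinuousLinearMap.zero_apply] at this
    linarith [this]
  -- convenient rfl facts
  have rfl1 : (fderiv ℝ f p) ((1:ℝ),(0:ℝ)) = pdx f p := rfl
  have rfl2 : (fderiv ℝ f p) ((0:ℝ),(1:ℝ)) = pdy f p := rfl
  have rfl3 : (fderiv ℝ (pdx f) p) ((1:ℝ),(0:ℝ)) = pdx (pdx f) p := rfl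
  have rfl4 : (fderiv ℝ (pdx f) p) ((0:ℝ),(1:ℝ)) = pdy (pdx f) p := rfl
  have rfl5 : (fderiv ℝ (pdy f) p) ((1:ℝ),(0:ℝ)) = pdx (pdy f) p := rfl
  have rfl6 : (fderiv ℝ (pdy f) p) ((0:ℝ),(1:ℝ)) = pdy (pdy f) p := rfl
  have hc0' : ⟪pdy f p, pdx f p⟫ = 0 := by rw [real_inner_comm]; exact hc0
  -- scalar identities
  have cA : ⟪pdx f p, pdx (pdx f) p⟫ = ⟪pdx (pdx f) p, pdx f p⟫ := real_inner_comm _ _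
  have cB : ⟪pdy f p, pdx (pdy f) p⟫ = ⟪pdx (pdy f) p, pdy f p⟫ := real_inner_comm _ _
  have cC : ⟪pdx f p, pdx (pdy f) p⟫ = ⟪pdx (pdy f) p, pdx f p⟫ := real_inner_comm _ _
  have cD : ⟪pdx (pdx f) p, pdy f p⟫ = ⟪pdy f p, pdx (pdx f) p⟫ := real_inner_comm _ _
  have hH10 := hH (1,0)
  rw [rfl3, rfl5] at hH10
  have hG10 := hG (1,0)
  rw [rfl3, rfl5] at hG10
  have hbv' : ⟪pdx (pdy f) p, pdy f p⟫ = ⟪pdx (pdx f) p, pdx f p⟫ := by linarith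
  have hbv : ⟪pdy f p, pdx (pdy f) p⟫ = ⟪pdx (pdx f) p, pdx f p⟫ := by linarith
  have hav : ⟪pdx (pdx f) p, pdy f p⟫ = -⟪pdx (pdy f) p, pdx f p⟫ := by linarith
  have hav' : ⟪pdy f p, pdx (pdx f) p⟫ = -⟪pdx (pdy f) p, pdx f p⟫ := by linarith
  refine ⟨?_, ?_, hbv', hav, hcc, hsym⟩
  · have hgx : pdx (pedal f) p = fderiv ℝ (pedal f) p (1,0) := rfl
    rw [hgx, hfd_eq, hDZ (1,0), rfl1, rfl3, rfl5]
    rw [hc0, hc1, cA, hbv, hbv']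
    set r := ⟪pdx f p, pdx f p⟫ with hrdef
    set al := ⟪f p, pdx f p⟫ with haldef
    set be := ⟪f p, pdy f p⟫ with hbedef
    set P := ⟪f p, pdx (pdx f) p⟫ with hPdef
    set Q := ⟪f p, pdx (pdy f) p⟫ with hQdef
    set s := ⟪pdx (pdx f) p, pdx f p⟫ with hsdef
    set t := ⟪pdx (pdy f) p, pdx f p⟫ with htdef
    match_scalars <;> field_simp <;> ring
  · have hgy : pdy (pedal f) p = fderiv ℝ (pedal f) p (0,1) := rfl
    rw [hgy, hfd_eq, hDZ (0,1), rfl2, rfl4, rfl6, hsym, hcc]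
    rw [hc0', hc1, cC]
    rw [inner_neg_right (𝕜 := ℝ) (f p), inner_neg_right (𝕜 := ℝ) (pdy f p),
      inner_neg_left (𝕜 := ℝ) (pdx (pdx f) p) (pdy f p)]
    rw [hav, hav']
    set r := ⟪pdx f p, pdx f p⟫ with hrdef
    set al := ⟪f p, pdx f p⟫ with haldef
    set be := ⟪f p, pdy f p⟫ with hbedef
    set P := ⟪f p, pdx (pdx f) p⟫ with hPdef
    set Q := ⟪f p, pdx (pdy f) p⟫ with hQdef
    set s := ⟪pdx (pdx f) p, pdx f p⟫ with hsdef
    set t := ⟪pdx (pdy f) p, pdx f p⟫ with htdef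
    match_scalars <;> field_simp <;> ring

end maincomp

section phipart
variable {n : ℕ} {U : Set (ℝ × ℝ)} {f : ℝ × ℝ → Euc n} {p : ℝ × ℝ}

lemma cx_neg (a : Euc n) : cx (-a) = - cx a := by
  have := cxL.map_neg a; simpa using this

lemma pdz_phi (hU : IsOpen U) (hf : ContDiffOn ℝ (⊤ : ℕ∞) f U)
    (hharm : ∀ q ∈ U, pdx (pdx f) q + pdy (pdy f) q = 0) (hp : p ∈ U) :
    pdz (phiOf f) p = cx (pdx (pdx f) p) - Complex.I • cx (pdx (pdy f) p) := by
  have hdX : DifferentiableAt ℝ (pdx f) p := diff_pdx hU hf hp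
  have hdY : DifferentiableAt ℝ (pdy f) p := diff_pdy hU hf hp
  have hA : HasFDerivAt (fun q => cx (pdx f q) : ℝ × ℝ → EucC n)
      (cxL.comp (fderiv ℝ (pdx f) p)) p := cxL.hasFDerivAt.comp p hdX.hasFDerivAt
  have hB : HasFDerivAt (fun q => cx (pdy f q) : ℝ × ℝ → EucC n)
      (cxL.comp (fderiv ℝ (pdy f) p)) p := cxL.hasFDerivAt.comp p hdY.hasFDerivAt
  have hB' : HasFDerivAt (fun q => Complex.I • cx (pdy f q) : ℝ × ℝ → EucC n)
      (Complex.I • cxL.comp (fderiv ℝ (pdy f) p)) p := hB.const_smul Complex.I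
  have h : HasFDerivAt (phiOf f)
      (cxL.comp (fderiv ℝ (pdx f) p) - Complex.I • cxL.comp (fderiv ℝ (pdy f) p)) p :=
    hA.sub hB'
  have h1 : pdxC (phiOf f) p = cx (pdx (pdx f) p) - Complex.I • cx (pdx (pdy f) p) := by
    show fderiv ℝ (phiOf f) p (1,0) = _
    rw [h.fderiv]
    simp only [ContinuousLinearMap.coe_sub', Pi.sub_apply, ContinuousLinearMap.coe_smul',
      Pi.smul_apply, ContinuousLinearMap.coe_comp', Function.comp_apply, cxL_apply]
    rfl
  have hcc : pdy (pdy f) p = - pdx (pdx f) p :=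
    (neg_eq_of_add_eq_zero_right (hharm p hp)).symm
  have hsym : pdy (pdx f) p = pdx (pdy f) p := (pd_symm hU hf hp).symm
  have h2 : pdyC (phiOf f) p = cx (pdx (pdy f) p) + Complex.I • cx (pdx (pdx f) p) := by
    show fderiv ℝ (phiOf f) p (0,1) = _
    rw [h.fderiv]
    simp only [ContinuousLinearMap.coe_sub', Pi.sub_apply, ContinuousLinearMap.coe_smul',
      Pi.smul_apply, ContinuousLinearMap.coe_comp', Function.comp_apply, cxL_apply]
    have e1 : (fderiv ℝ (pdx f) p) ((0:ℝ),(1:ℝ)) = pdy (pdx f) p := rfl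
    have e2 : (fderiv ℝ (pdy f) p) ((0:ℝ),(1:ℝ)) = pdy (pdy f) p := rfl
    rw [e1, e2, hsym, hcc, cx_neg]
    module
  show (1 / 2 : ℂ) • (pdxC (phiOf f) p - Complex.I • pdyC (phiOf f) p) = _
  rw [h1, h2, smul_add, smul_smul, Complex.I_mul_I, neg_one_smul]
  module

lemma bil_val (a b : Euc n) :
    bil (cx a - Complex.I • cx b) (cx a - Complex.I • cx b)
      = ((⟪a,a⟫ - ⟪b,b⟫ : ℝ) : ℂ) - 2 * Complex.I * ((⟪a,b⟫ : ℝ) : ℂ) := by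
  simp only [bil, PiLp.sub_apply, PiLp.smul_apply, smul_eq_mul, cx]
  rw [PiLp.inner_apply, PiLp.inner_apply, PiLp.inner_apply]
  simp only [RCLike.inner_apply, conj_trivial]
  push_cast
  rw [Finset.mul_sum, ← Finset.sum_sub_distrib, ← Finset.sum_sub_distrib]
  apply Finset.sum_congr rfl
  intro k _
  linear_combination (((b k : ℝ) : ℂ) * ((b k : ℝ) : ℂ)) * Complex.I_mul_I

lemma bil_zero_iff (x y : ℝ) :
    ((x : ℂ) - 2 * Complex.I * (y : ℂ) = 0) ↔ (x = 0 ∧ y = 0) := by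
  rw [Complex.ext_iff]
  simp

end phipart

section algebrapart
variable {n : ℕ}

lemma gxgy (u v a b F : Euc n) (r al be P Q s t A B C : ℝ)
    (huu : ⟪u,u⟫ = r) (hvv : ⟪v,v⟫ = r) (huv : ⟪u,v⟫ = 0) (hvu : ⟪v,u⟫ = 0)
    (hau : ⟪a,u⟫ = s) (hua : ⟪u,a⟫ = s) (hav : ⟪a,v⟫ = -t) (hva : ⟪v,a⟫ = -t)
    (hbu : ⟪b,u⟫ = t) (hub : ⟪u,b⟫ = t) (hbv : ⟪b,v⟫ = s) (hvb : ⟪v,b⟫ = s)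
    (haa : ⟪a,a⟫ = A) (hbb : ⟪b,b⟫ = B) (hab : ⟪a,b⟫ = C) (hba : ⟪b,a⟫ = C)
    (hr0 : r ≠ 0) :
    ⟪r⁻¹ • ((2*s*al/r - P) • u + (2*s*be/r - Q) • v - al • a - be • b),
     r⁻¹ • ((2*t*al/r - Q) • u + (2*t*be/r + P) • v + be • a - al • b)⟫
      = ((al^2-be^2)*C - al*be*(A-B))/r^2
    ∧ ⟪r⁻¹ • ((2*s*al/r - P) • u + (2*s*be/r - Q) • v - al • a - be • b),
       r⁻¹ • ((2*s*al/r - P) • u + (2*s*be/r - Q) • v - al • a - be • b)⟫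
      - ⟪r⁻¹ • ((2*t*al/r - Q) • u + (2*t*be/r + P) • v + be • a - al • b),
         r⁻¹ • ((2*t*al/r - Q) • u + (2*t*be/r + P) • v + be • a - al • b)⟫
      = ((al^2-be^2)*(A-B) + 4*al*be*C)/r^2 := by
  constructor <;>
  · simp only [inner_sub_left, inner_sub_right, inner_add_left, inner_add_right,
      real_inner_smul_left, real_inner_smul_right, huu, hvv, huv, hvu, hau, hua, hav, hva,
      hbu, hub, hbv, hvb, haa, hbb, hab, hba]
    field_simp
    ring

end algebrapart

set_option maxHeartbeats 1000000 in
/-- The pedal surface of a minimal surface is conformal to it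
iff the surface is 1-isotropic. -/
theorem pedal_conformal_iff_isotropic1
    {n : ℕ} (U : Set (ℝ × ℝ)) (hU : IsOpen U) (hUconn : IsConnected U)
    (f : ℝ × ℝ → Euc n) (hmin : IsMinimalOn f U)
    (hZ : ∀ p ∈ U, Zt f p ≠ 0) :
    (∀ p ∈ U, (inner ℝ (pdx (pedal f) p) (pdy (pedal f) p) : ℝ) = 0 ∧
        ‖pdx (pedal f) p‖ = ‖pdy (pedal f) p‖) ↔
      IsIsotropic1On f U := by
  obtain ⟨⟨⟨hsmooth, himm⟩, hconf⟩, hharm⟩ := hmin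
  have hconf0 : ∀ q ∈ U, ⟪pdx f q, pdy f q⟫ = 0 := fun q hq => (hconf q hq).1
  have hconf1 : ∀ q ∈ U, ⟪pdx f q, pdx f q⟫ = ⟪pdy f q, pdy f q⟫ := fun q hq => by
    rw [real_inner_self_eq_norm_sq, real_inner_self_eq_norm_sq, (hconf q hq).2]
  have hne : ∀ q ∈ U, pdx f q ≠ 0 ∧ pdy f q ≠ 0 := fun q hq =>
    ⟨by have := (himm q hq).ne_zero 0; simpa using this,
     by have := (himm q hq).ne_zero 1; simpa using this⟩
  -- pointwise equivalence
  have key : ∀ q ∈ U,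
      ((inner ℝ (pdx (pedal f) q) (pdy (pedal f) q) : ℝ) = 0 ∧
        ‖pdx (pedal f) q‖ = ‖pdy (pedal f) q‖) ↔
      bil (pdz (phiOf f) q) (pdz (phiOf f) q) = 0 := by
    intro q hq
    obtain ⟨hgx, hgy, hbv, hav, hcc, hsym⟩ :=
      pedal_pd hU hsmooth hconf0 hconf1 hne hharm hq
    have hr0 : ⟪pdx f q, pdx f q⟫ ≠ 0 := fun h => (hne q hq).1 (inner_self_eq_zero.mp h)
    have hbil : bil (pdz (phiOf f) q) (pdz (phiOf f) q)
        = ((⟪pdx (pdx f) q, pdx (pdx f) q⟫ - ⟪pdx (pdy f) q, pdx (pdy f) q⟫ : ℝ) : ℂ)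
          - 2 * Complex.I * ((⟪pdx (pdx f) q, pdx (pdy f) q⟫ : ℝ) : ℂ) := by
      rw [pdz_phi hU hsmooth hharm hq]; exact bil_val _ _
    -- Z ≠ 0 gives (al, be) ≠ 0
    have hZf : Zt f q = (⟪pdx f q, pdx f q⟫)⁻¹ • (⟪f q, pdx f q⟫ • pdx f q)
        + (⟪pdy f q, pdy f q⟫)⁻¹ • (⟪f q, pdy f q⟫ • pdy f q) := by
      show (orthogonalProjection (span ℝ {pdx f q, pdy f q}) (f q) : Euc n) = _
      exact proj_span_pair _ _ _ (hconf0 q hq) (hne q hq).1 (hne q hq).2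
    have halbe : ¬(⟪f q, pdx f q⟫ = 0 ∧ ⟪f q, pdy f q⟫ = 0) := by
      rintro ⟨h1, h2⟩
      apply hZ q hq
      rw [hZf, h1, h2]
      simp
    have hI := gxgy (pdx f q) (pdy f q) (pdx (pdx f) q) (pdx (pdy f) q) (f q)
      (⟪pdx f q, pdx f q⟫) (⟪f q, pdx f q⟫) (⟪f q, pdy f q⟫)
      (⟪f q, pdx (pdx f) q⟫) (⟪f q, pdx (pdy f) q⟫)
      (⟪pdx (pdx f) q, pdx f q⟫) (⟪pdx (pdy f) q, pdx f q⟫)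
      (⟪pdx (pdx f) q, pdx (pdx f) q⟫) (⟪pdx (pdy f) q, pdx (pdy f) q⟫)
      (⟪pdx (pdx f) q, pdx (pdy f) q⟫)
      rfl (hconf1 q hq).symm (hconf0 q hq) (by rw [real_inner_comm]; exact hconf0 q hq)
      rfl (real_inner_comm _ _) hav (by rw [real_inner_comm]; exact hav)
      rfl (real_inner_comm _ _) hbv (by rw [real_inner_comm]; exact hbv)
      rfl rfl rfl (real_inner_comm _ _)
      hr0
    have heq1 : (inner ℝ (pdx (pedal f) q) (pdy (pedal f) q) : ℝ)
        = ((⟪f q, pdx f q⟫^2 - ⟪f q, pdy f q⟫^2) * ⟪pdx (pdx f) q, pdx (pdy f) q⟫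
            - ⟪f q, pdx f q⟫ * ⟪f q, pdy f q⟫
              * (⟪pdx (pdx f) q, pdx (pdx f) q⟫ - ⟪pdx (pdy f) q, pdx (pdy f) q⟫))
          / ⟪pdx f q, pdx f q⟫^2 := by
      rw [hgx, hgy]; exact hI.1
    have heq2 : (inner ℝ (pdx (pedal f) q) (pdx (pedal f) q) : ℝ)
          - (inner ℝ (pdy (pedal f) q) (pdy (pedal f) q) : ℝ)
        = ((⟪f q, pdx f q⟫^2 - ⟪f q, pdy f q⟫^2)
            * (⟪pdx (pdx f) q, pdx (pdx f) q⟫ - ⟪pdx (pdy f) q, pdx (pdy f) q⟫)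
            + 4 * ⟪f q, pdx f q⟫ * ⟪f q, pdy f q⟫ * ⟪pdx (pdx f) q, pdx (pdy f) q⟫)
          / ⟪pdx f q, pdx f q⟫^2 := by
      rw [hgx, hgy]; exact hI.2
    have hs0 : (⟪f q, pdx f q⟫^2 + ⟪f q, pdy f q⟫^2) ≠ 0 := by
      intro hh
      exact halbe ⟨by nlinarith [sq_nonneg (⟪f q, pdx f q⟫), sq_nonneg (⟪f q, pdy f q⟫)],
        by nlinarith [sq_nonneg (⟪f q, pdx f q⟫), sq_nonneg (⟪f q, pdy f q⟫)]⟩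
    constructor
    · rintro ⟨h1, h2⟩
      have h2' : (inner ℝ (pdx (pedal f) q) (pdx (pedal f) q) : ℝ)
          = (inner ℝ (pdy (pedal f) q) (pdy (pedal f) q) : ℝ) := by
        rw [real_inner_self_eq_norm_sq, real_inner_self_eq_norm_sq, h2]
      rw [h1] at heq1
      rw [h2', sub_self] at heq2
      have e1 : (⟪f q, pdx f q⟫^2 - ⟪f q, pdy f q⟫^2) * ⟪pdx (pdx f) q, pdx (pdy f) q⟫
          - ⟪f q, pdx f q⟫ * ⟪f q, pdy f q⟫
            * (⟪pdx (pdx f) q, pdx (pdx f) q⟫ - ⟪pdx (pdy f) q, pdx (pdy f) q⟫) = 0 :=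
        (div_eq_zero_iff.mp heq1.symm).resolve_right (pow_ne_zero 2 hr0)
      have e2 : (⟪f q, pdx f q⟫^2 - ⟪f q, pdy f q⟫^2)
            * (⟪pdx (pdx f) q, pdx (pdx f) q⟫ - ⟪pdx (pdy f) q, pdx (pdy f) q⟫)
          + 4 * ⟪f q, pdx f q⟫ * ⟪f q, pdy f q⟫ * ⟪pdx (pdx f) q, pdx (pdy f) q⟫ = 0 :=
        (div_eq_zero_iff.mp heq2.symm).resolve_right (pow_ne_zero 2 hr0)
      have hX : ⟪pdx (pdx f) q, pdx (pdx f) q⟫ - ⟪pdx (pdy f) q, pdx (pdy f) q⟫ = 0 := by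
        have h6 : (⟪f q, pdx f q⟫^2 + ⟪f q, pdy f q⟫^2)^2
            * (⟪pdx (pdx f) q, pdx (pdx f) q⟫ - ⟪pdx (pdy f) q, pdx (pdy f) q⟫) = 0 := by
          linear_combination (⟪f q, pdx f q⟫^2 - ⟪f q, pdy f q⟫^2) * e2
            - 4 * ⟪f q, pdx f q⟫ * ⟪f q, pdy f q⟫ * e1
        exact (mul_eq_zero.mp h6).resolve_left (pow_ne_zero 2 hs0)
      have hC : ⟪pdx (pdx f) q, pdx (pdy f) q⟫ = 0 := by
        have h6 : (⟪f q, pdx f q⟫^2 + ⟪f q, pdy f q⟫^2)^2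
            * ⟪pdx (pdx f) q, pdx (pdy f) q⟫ = 0 := by
          linear_combination ⟪f q, pdx f q⟫ * ⟪f q, pdy f q⟫ * e2
            + (⟪f q, pdx f q⟫^2 - ⟪f q, pdy f q⟫^2) * e1
        exact (mul_eq_zero.mp h6).resolve_left (pow_ne_zero 2 hs0)
      rw [hbil, hX, hC]
      simp
    · intro h0
      rw [hbil] at h0
      obtain ⟨hX, hC⟩ := (bil_zero_iff _ _).mp h0
      constructor
      · rw [heq1, hX, hC]; ring
      · have h7 : (inner ℝ (pdx (pedal f) q) (pdx (pedal f) q) : ℝ)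
            = (inner ℝ (pdy (pedal f) q) (pdy (pedal f) q) : ℝ) := by
          have := heq2
          rw [hX, hC] at this
          have h8 : (inner ℝ (pdx (pedal f) q) (pdx (pedal f) q) : ℝ)
              - (inner ℝ (pdy (pedal f) q) (pdy (pedal f) q) : ℝ) = 0 := by
            rw [this]; ring
          linarith
        rw [real_inner_self_eq_norm_sq, real_inner_self_eq_norm_sq] at h7
        have hb1 := norm_nonneg (pdx (pedal f) q)
        have hb2 := norm_nonneg (pdy (pedal f) q)
        nlinarith [h7, hb1, hb2]
  constructor
  · intro h q hq
    exact (key q hq).mp (h q hq)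
  · intro h q hq
    exact (key q hq).mpr (h q hq)
end
end

section
/- Let f : U → ℝⁿ be a conformal immersion and p ∈ U. Then the curvature ellipse of f at p is a nondegenerate circle, i.e. ⟨ξ₁,ξ₂⟩(p) = 0 and ‖ξ₁‖(p) = ‖ξ₂‖(p) ≠ 0, if and only if Pᶜ(f_zz)(p) ≠ 0 and ⟪Pᶜ(f_zz)(p), Pᶜ(f_zz)(p)⟫ = 0, where f_zz := (1/4)(f_xx − f_yy − 2i·f_xy) and Pᶜ is the ℂ-linear extension of P. -/
noncomputable section

open Complex Submodule Module
open scoped RealInnerProductSpace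

variable {n : ℕ}

section AuxCircle

variable {n : ℕ}

lemma nProj_smul' (f : ℝ × ℝ → Euc n) (p : ℝ × ℝ) (c : ℝ) (v : Euc n) :
    nProj f p (c • v) = c • nProj f p v := by
  simp only [nProj, projSub, map_smul, Submodule.coe_smul, smul_sub]

lemma nProj_sub' (f : ℝ × ℝ → Euc n) (p : ℝ × ℝ) (v w : Euc n) :
    nProj f p (v - w) = nProj f p v - nProj f p w := by
  simp only [nProj, projSub, map_sub, Submodule.coe_sub]
  abel

lemma reV_gzz (f : ℝ × ℝ → Euc n) (p : ℝ × ℝ) :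
    reV (gzz f p) = (1/4 : ℝ) • (pdx (pdx f) p - pdy (pdy f) p) := by
  ext k
  simp [reV, gzz, cx, PiLp.smul_apply, PiLp.sub_apply, Complex.mul_re, Complex.mul_im]

lemma imV_gzz (f : ℝ × ℝ → Euc n) (p : ℝ × ℝ) :
    imV (gzz f p) = (-(1/2) : ℝ) • pdx (pdy f) p := by
  ext k
  simp [imV, gzz, cx, PiLp.smul_apply, PiLp.sub_apply, Complex.mul_re, Complex.mul_im]
  ring

end AuxCircle

/-- The curvature ellipse at a point is a nondegenerate circle iff the
(2,0)-part of the second fundamental form is nonzero and isotropic there. -/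
theorem circle_iff_isotropic_secondFF
    {n : ℕ} (U : Set (ℝ × ℝ)) (hU : IsOpen U) (hUconn : IsConnected U)
    (f : ℝ × ℝ → Euc n) (hconf : IsConformalOn f U) (p : ℝ × ℝ) (hp : p ∈ U) :
    ((inner ℝ (xi1 f p) (xi2 f p) : ℝ) = 0 ∧ ‖xi1 f p‖ = ‖xi2 f p‖ ∧ xi1 f p ≠ 0) ↔
      (nProjC f p (gzz f p) ≠ 0 ∧
        bil (nProjC f p (gzz f p)) (nProjC f p (gzz f p)) = 0) := by
  have hfx : pdx f p ≠ 0 := by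
    have h := hconf.1.2 p hp
    have h0 := h.ne_zero 0
    simpa using h0
  set ρ2 : ℝ := ‖pdx f p‖ ^ 2 with hρ2def
  have hρ2 : 0 < ρ2 := pow_pos (norm_pos_iff.mpr hfx) 2
  set A : Euc n := a11 f p - a22 f p with hAdef
  set B : Euc n := a12 f p with hBdef
  set SA : ℝ := ∑ k, A k * A k with hSAdef
  set SB : ℝ := ∑ k, B k * B k with hSBdef
  set SAB : ℝ := ∑ k, A k * B k with hSABdef
  have hinnerA : (inner ℝ A A : ℝ) = SA := by simp only [PiLp.inner_apply, RCLike.inner_apply, conj_trivial, hSAdef, mul_comm]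
  have hinnerB : (inner ℝ B B : ℝ) = SB := by simp only [PiLp.inner_apply, RCLike.inner_apply, conj_trivial, hSBdef, mul_comm]
  have hinnerAB : (inner ℝ A B : ℝ) = SAB := by simp only [PiLp.inner_apply, RCLike.inner_apply, conj_trivial, hSABdef, mul_comm]
  have hnormA : ‖A‖ ^ 2 = SA := by rw [← hinnerA]; exact (real_inner_self_eq_norm_sq A).symm
  have hnormB : ‖B‖ ^ 2 = SB := by rw [← hinnerB]; exact (real_inner_self_eq_norm_sq B).symm
  have hA0 : A = 0 ↔ SA = 0 := by
    rw [← hinnerA, inner_self_eq_zero]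
  have hB0 : B = 0 ↔ SB = 0 := by
    rw [← hinnerB, inner_self_eq_zero]
  -- the complexified projected gzz
  set w : EucC n := nProjC f p (gzz f p) with hwdef
  have hw : ∀ k, w k = (1/4 : ℂ) * (A k : ℂ) - (1/2 : ℂ) * Complex.I * (B k : ℂ) := by
    intro k
    have hre : nProj f p (reV (gzz f p)) = (1/4 : ℝ) • A := by
      rw [reV_gzz, nProj_smul', nProj_sub']
      rfl
    have him : nProj f p (imV (gzz f p)) = (-(1/2) : ℝ) • B := by
      rw [imV_gzz, nProj_smul']
      rfl
    have hsplit : w k = ((nProj f p (reV (gzz f p))) k : ℂ)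
        + Complex.I * ((nProj f p (imV (gzz f p))) k : ℂ) := by
      simp [hwdef, nProjC, cx, PiLp.add_apply, PiLp.smul_apply]
    rw [hsplit, hre, him]
    simp only [PiLp.smul_apply, smul_eq_mul]
    push_cast
    ring
  -- xi1, xi2 in terms of A, B
  have hxi1 : xi1 f p = (2 * ρ2)⁻¹ • A := rfl
  have hxi2 : xi2 f p = ρ2⁻¹ • B := rfl
  have h2ρ : (2 * ρ2) ≠ 0 := by positivity
  -- LHS pieces
  have hL1 : (inner ℝ (xi1 f p) (xi2 f p) : ℝ) = 0 ↔ SAB = 0 := by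
    rw [hxi1, hxi2, real_inner_smul_left, real_inner_smul_right, hinnerAB]
    constructor
    · intro h
      rcases mul_eq_zero.mp h with h' | h'
      · exact absurd h' (inv_ne_zero h2ρ)
      · rcases mul_eq_zero.mp h' with h'' | h''
        · exact absurd h'' (inv_ne_zero (ne_of_gt hρ2))
        · exact h''
    · intro h; rw [h]; ring
  have hL2 : ‖xi1 f p‖ = ‖xi2 f p‖ ↔ SA = 4 * SB := by
    rw [hxi1, hxi2, norm_smul, norm_smul]
    rw [Real.norm_eq_abs, Real.norm_eq_abs, abs_of_pos (by positivity), abs_of_pos (by positivity)]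
    constructor
    · intro h
      have h' : ‖A‖ = 2 * ‖B‖ := by
        have hcalc : (2 * ρ2) * ((2 * ρ2)⁻¹ * ‖A‖) = (2 * ρ2) * (ρ2⁻¹ * ‖B‖) := by rw [h]
        rw [← mul_assoc, mul_inv_cancel₀ h2ρ, one_mul] at hcalc
        rw [hcalc]
        field_simp
      rw [← hnormA, ← hnormB, h']
      ring
    · intro h
      have hsq : ‖A‖ ^ 2 = (2 * ‖B‖) ^ 2 := by rw [hnormA, h, ← hnormB]; ring
      have h' : ‖A‖ = 2 * ‖B‖ := by
        have h1 : ‖A‖ = Real.sqrt (‖A‖ ^ 2) := (Real.sqrt_sq (norm_nonneg A)).symm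
        rw [h1, hsq, Real.sqrt_sq (by positivity)]
      rw [h']
      field_simp
  have hL3 : xi1 f p ≠ 0 ↔ A ≠ 0 := by
    rw [hxi1]
    constructor
    · intro h hA
      exact h (by rw [hA, smul_zero])
    · intro hA h
      rcases smul_eq_zero.mp h with h' | h'
      · exact (inv_ne_zero h2ρ) h'
      · exact hA h'
  -- RHS pieces
  have hbil : bil w w = (1/16 : ℂ) * (SA : ℂ) - (1/4 : ℂ) * (SB : ℂ)
      - (1/4 : ℂ) * Complex.I * (SAB : ℂ) := by
    unfold bil
    have key : ∀ k, w k * w k = (1/16 : ℂ) * ((A k : ℂ) * (A k : ℂ))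
        - (1/4 : ℂ) * ((B k : ℂ) * (B k : ℂ))
        - (1/4 : ℂ) * Complex.I * ((A k : ℂ) * (B k : ℂ)) := by
      intro k
      rw [hw k]
      have hI : Complex.I * Complex.I = -1 := Complex.I_mul_I
      ring_nf
      rw [Complex.I_sq]
      ring
    rw [Finset.sum_congr rfl (fun k _ => key k)]
    rw [Finset.sum_sub_distrib, Finset.sum_sub_distrib, ← Finset.mul_sum, ← Finset.mul_sum,
      ← Finset.mul_sum]
    push_cast [hSAdef, hSBdef, hSABdef]
    ring
  have hR2 : bil w w = 0 ↔ (SA = 4 * SB ∧ SAB = 0) := by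
    rw [hbil, Complex.ext_iff]
    simp only [Complex.sub_re, Complex.sub_im, Complex.mul_re, Complex.mul_im,
      Complex.ofReal_re, Complex.ofReal_im, Complex.I_re, Complex.I_im, Complex.zero_re,
      Complex.zero_im, Complex.one_re, Complex.one_im, Complex.div_re, Complex.div_im]
    norm_num
    intro _
    constructor <;> intro h <;> linarith
  have hR1 : w ≠ 0 ↔ ¬ (A = 0 ∧ B = 0) := by
    have hwall : w = 0 ↔ ∀ k, A k = 0 ∧ B k = 0 := by
      constructor
      · intro h k
        have hk : w k = 0 := by rw [h]; rfl
        rw [hw k] at hk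
        have hre := congrArg Complex.re hk
        have him := congrArg Complex.im hk
        simp [Complex.mul_re, Complex.mul_im] at hre him
        exact ⟨hre, him⟩
      · intro h
        ext k
        rw [hw k, (h k).1, (h k).2]
        simp
    constructor
    · intro h hc
      apply h
      rw [hwall]
      intro k
      exact ⟨by rw [hc.1]; rfl, by rw [hc.2]; rfl⟩
    · intro h hc
      apply h
      rw [hwall] at hc
      constructor
      · ext k; exact (hc k).1
      · ext k; exact (hc k).2
  rw [hL1, hL2, hL3, hR1, hR2]
  constructor
  · rintro ⟨h1, h2, h3⟩
    exact ⟨fun hc => h3 hc.1, h2, h1⟩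
  · rintro ⟨h1, h2, h3⟩
    refine ⟨h3, h2, fun hc => h1 ⟨hc, ?_⟩⟩
    rw [hB0]
    have hsa := hA0.mp hc
    linarith
end
end
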